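/- arXiv:2604.19948 — 6 statements merged into one kernel-verified Lean document; each statement's English description precedes it below -/
import Mathlib

section
/- Let n ≥ 1, let V : ℝⁿ → ℝ be continuous and ℤⁿ-periodic, let p ∈ ℝⁿ, λ ∈ ℝ, and let v : ℝⁿ → ℝ be a ℤⁿ-periodic C² function satisfying the cell problem −(1/2)Δv(x) + (1/2)|p + ∇v(x)|² + V(x) = λ for all x ∈ ℝⁿ. Then (1/2)|p|² + inf_{ℝⁿ} V ≤ λ ≤ (1/2)|p|² + sup_{ℝⁿ} V. -/
open scoped RealInnerProductSpace
open MeasureTheory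

/-- The Euclidean Laplacian: sum of second partial derivatives. -/
noncomputable def lap {n : ℕ} (f : EuclideanSpace ℝ (Fin n) → ℝ)
    (x : EuclideanSpace ℝ (Fin n)) : ℝ :=
  ∑ i : Fin n,
    fderiv ℝ (fun y => fderiv ℝ f y (EuclideanSpace.single i 1)) x (EuclideanSpace.single i 1)

/-- The divergence of a vector field: sum of partial derivatives of the components. -/
noncomputable def dvg {n : ℕ} (F : EuclideanSpace ℝ (Fin n) → EuclideanSpace ℝ (Fin n))
    (x : EuclideanSpace ℝ (Fin n)) : ℝ :=
  ∑ i : Fin n, fderiv ℝ (fun y => F y i) x (EuclideanSpace.single i 1)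

/-- A function on ℝⁿ is ℤⁿ-periodic if it is invariant under translation by
every integer vector. -/
def IsZnPeriodic {n : ℕ} {α : Type*} (f : EuclideanSpace ℝ (Fin n) → α) : Prop :=
  ∀ (x : EuclideanSpace ℝ (Fin n)) (k : Fin n → ℤ),
    f (x + ∑ i : Fin n, (k i : ℝ) • EuclideanSpace.single i (1 : ℝ)) = f x

/-- The unit cube [0,1]ⁿ in ℝⁿ. -/
def unitCube (n : ℕ) : Set (EuclideanSpace ℝ (Fin n)) :=
  {x | ∀ i, x i ∈ Set.Icc (0 : ℝ) 1}

/-!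
At a maximum point `x₀` of `v` the gradient vanishes and `Δv(x₀) ≤ 0`, so the cell equation at
`x₀` reads `λ = -(1/2)Δv(x₀) + (1/2)|p|² + V(x₀) ≥ (1/2)|p|² + V(x₀) ≥ (1/2)|p|² + inf V`; at a
minimum point the same computation gives the upper bound. Both extrema exist, and `V` is bounded,
because a continuous `ℤⁿ`-periodic function takes all its values on the compact unit cube.
-/

open Filter Set Topology

theorem IsLocalMax.deriv_deriv_nonpos {g : ℝ → ℝ} {a : ℝ} (h : IsLocalMax g a)
    (hc : ContinuousAt g a) : deriv (deriv g) a ≤ 0 := by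
  by_contra! hpos
  -- a strict second-derivative sign would make `a` also a local minimum, so `g` is locally
  -- constant and its second derivative vanishes
  have hmin := isLocalMin_of_deriv_deriv_pos hpos h.deriv_eq_zero hc
  have hconst : g =ᶠ[𝓝 a] fun _ => g a := (h.and hmin).mono fun _ hx => le_antisymm hx.1 hx.2
  have hderiv : deriv g =ᶠ[𝓝 a] fun _ => 0 :=
    hconst.eventuallyEq_nhds.mono fun _ hx => by rw [hx.deriv_eq, deriv_const]
  rw [hderiv.deriv_eq, deriv_const] at hpos
  exact hpos.false

theorem IsLocalMin.deriv_deriv_nonneg {g : ℝ → ℝ} {a : ℝ} (h : IsLocalMin g a)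
    (hc : ContinuousAt g a) : 0 ≤ deriv (deriv g) a := by
  simpa using h.neg.deriv_deriv_nonpos hc.neg

section Directional

variable {E : Type*} [NormedAddCommGroup E] [NormedSpace ℝ E] {f : E → ℝ} {a y : E}

theorem deriv_deriv_comp_add_smul (hf : Differentiable ℝ f)
    (hf' : DifferentiableAt ℝ (fun x => fderiv ℝ f x y) a) :
    deriv (deriv fun t : ℝ => f (a + t • y)) 0 = fderiv ℝ (fun x => fderiv ℝ f x y) a y := by
  have hline : ∀ t : ℝ, HasDerivAt (fun t : ℝ => a + t • y) y t := fun t => by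
    simpa using ((hasDerivAt_id t).smul_const y).const_add a
  have hderiv : (deriv fun t : ℝ => f (a + t • y)) = fun t => fderiv ℝ f (a + t • y) y :=
    funext fun t => ((hf _).hasFDerivAt.comp_hasDerivAt t (hline t)).deriv
  rw [hderiv]
  exact (hf'.hasFDerivAt.comp_hasDerivAt_of_eq 0 (hline 0) (by simp)).deriv

theorem ContDiff.differentiableAt_fderiv_apply (hf : ContDiff ℝ 2 f) :
    DifferentiableAt ℝ (fun x => fderiv ℝ f x y) a :=
  ((hf.fderiv_right (m := 1) (by norm_num)).differentiable one_ne_zero a).clm_apply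
    (differentiableAt_const y)

theorem IsLocalMax.fderiv_fderiv_apply_self_nonpos (h : IsLocalMax f a) (hf : Differentiable ℝ f)
    (hf' : DifferentiableAt ℝ (fun x => fderiv ℝ f x y) a) :
    fderiv ℝ (fun x => fderiv ℝ f x y) a y ≤ 0 := by
  have hline : Continuous fun t : ℝ => a + t • y := by fun_prop
  rw [← deriv_deriv_comp_add_smul hf hf']
  refine IsLocalMax.deriv_deriv_nonpos ?_ (hf.continuous.comp hline).continuousAt
  have h0 : IsLocalMax f (a + (0 : ℝ) • y) := by simpa using h
  exact h0.comp_continuous (g := fun t : ℝ => a + t • y) hline.continuousAt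

theorem IsLocalMin.fderiv_fderiv_apply_self_nonneg (h : IsLocalMin f a) (hf : Differentiable ℝ f)
    (hf' : DifferentiableAt ℝ (fun x => fderiv ℝ f x y) a) :
    0 ≤ fderiv ℝ (fun x => fderiv ℝ f x y) a y := by
  have hline : Continuous fun t : ℝ => a + t • y := by fun_prop
  rw [← deriv_deriv_comp_add_smul hf hf']
  refine IsLocalMin.deriv_deriv_nonneg ?_ (hf.continuous.comp hline).continuousAt
  have h0 : IsLocalMin f (a + (0 : ℝ) • y) := by simpa using h
  exact h0.comp_continuous (g := fun t : ℝ => a + t • y) hline.continuousAt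

end Directional

theorem IsLocalMax.gradient_eq_zero {F : Type*} [NormedAddCommGroup F] [InnerProductSpace ℝ F]
    [CompleteSpace F] {f : F → ℝ} {a : F} (h : IsLocalMax f a) : gradient f a = 0 := by
  rw [gradient, h.fderiv_eq_zero, map_zero]

theorem IsLocalMin.gradient_eq_zero {F : Type*} [NormedAddCommGroup F] [InnerProductSpace ℝ F]
    [CompleteSpace F] {f : F → ℝ} {a : F} (h : IsLocalMin f a) : gradient f a = 0 := by
  rw [gradient, h.fderiv_eq_zero, map_zero]

section Euclidean

variable {n : ℕ} {v : EuclideanSpace ℝ (Fin n) → ℝ} {a : EuclideanSpace ℝ (Fin n)}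

theorem IsLocalMax.lap_nonpos (h : IsLocalMax v a) (hv : ContDiff ℝ 2 v) : lap v a ≤ 0 :=
  Finset.sum_nonpos fun _ _ => h.fderiv_fderiv_apply_self_nonpos
    (hv.differentiable two_ne_zero) hv.differentiableAt_fderiv_apply

theorem IsLocalMin.lap_nonneg (h : IsLocalMin v a) (hv : ContDiff ℝ 2 v) : 0 ≤ lap v a :=
  Finset.sum_nonneg fun _ _ => h.fderiv_fderiv_apply_self_nonneg
    (hv.differentiable two_ne_zero) hv.differentiableAt_fderiv_apply

end Euclidean

theorem isCompact_unitCube (n : ℕ) : IsCompact (unitCube n) := by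
  have hcube : unitCube n = WithLp.toLp 2 '' pi univ fun _ : Fin n => Icc (0 : ℝ) 1 := by
    ext x
    exact ⟨fun h => ⟨x.ofLp, mem_univ_pi.2 h, rfl⟩, by rintro ⟨y, hy, rfl⟩; exact mem_univ_pi.1 hy⟩
  rw [hcube]
  exact (isCompact_univ_pi fun _ => isCompact_Icc).image (PiLp.continuous_toLp 2 _)

theorem exists_mem_unitCube_add_intVec {n : ℕ} (x : EuclideanSpace ℝ (Fin n)) :
    ∃ y ∈ unitCube n, ∃ k : Fin n → ℤ,
      x = y + ∑ i : Fin n, (k i : ℝ) • EuclideanSpace.single i (1 : ℝ) := by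
  refine ⟨x - ∑ i : Fin n, (⌊x i⌋ : ℝ) • EuclideanSpace.single i (1 : ℝ), fun j => ?_,
    fun i => ⌊x i⌋, by abel⟩
  simpa [Pi.single_apply] using And.intro (Int.fract_nonneg (x j)) (Int.fract_lt_one (x j)).le

theorem IsZnPeriodic.isCompact_range {n : ℕ} {α : Type*} [TopologicalSpace α]
    {f : EuclideanSpace ℝ (Fin n) → α} (hp : IsZnPeriodic f) (hf : Continuous f) :
    IsCompact (range f) := by
  have hrange : range f = f '' unitCube n := by
    refine (image_subset_range f _).antisymm' ?_
    rintro _ ⟨x, rfl⟩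
    obtain ⟨y, hy, k, rfl⟩ := exists_mem_unitCube_add_intVec x
    exact ⟨y, hy, (hp y k).symm⟩
  rw [hrange]
  exact (isCompact_unitCube n).image hf

theorem cell_problem_eigenvalue_bounds_general (n : ℕ)
    (V : EuclideanSpace ℝ (Fin n) → ℝ) (hVc : Continuous V) (hVp : IsZnPeriodic V)
    (p : EuclideanSpace ℝ (Fin n)) (lam : ℝ)
    (v : EuclideanSpace ℝ (Fin n) → ℝ) (hv : ContDiff ℝ 2 v) (hvp : IsZnPeriodic v)
    (hcell : ∀ x, -(1/2) * lap v x + (1/2) * ‖p + gradient v x‖^2 + V x = lam) :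
    (1/2) * ‖p‖^2 + (⨅ x, V x) ≤ lam ∧ lam ≤ (1/2) * ‖p‖^2 + (⨆ x, V x) := by
  have hV := hVp.isCompact_range hVc
  have hvrange := hvp.isCompact_range hv.continuous
  constructor
  · obtain ⟨_, ⟨x₀, rfl⟩, hx₀⟩ := hvrange.exists_isGreatest (range_nonempty v)
    have hmax : IsLocalMax v x₀ := .of_forall fun x => hx₀ (mem_range_self x)
    have h := hcell x₀
    rw [hmax.gradient_eq_zero, add_zero] at h
    linarith [hmax.lap_nonpos hv, ciInf_le hV.bddBelow x₀]
  · obtain ⟨_, ⟨x₀, rfl⟩, hx₀⟩ := hvrange.exists_isLeast (range_nonempty v)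
    have hmin : IsLocalMin v x₀ := .of_forall fun x => hx₀ (mem_range_self x)
    have h := hcell x₀
    rw [hmin.gradient_eq_zero, add_zero] at h
    linarith [hmin.lap_nonneg hv, le_ciSup hV.bddAbove x₀]

/-- the eigenvalue of the cell problem
−(1/2)Δv + (1/2)|p + ∇v|² + V = λ, with v a ℤⁿ-periodic C² solution and V
continuous and ℤⁿ-periodic, satisfies
(1/2)|p|² + inf V ≤ λ ≤ (1/2)|p|² + sup V. -/
theorem cell_problem_eigenvalue_bounds (n : ℕ) (hn : 1 ≤ n)
    (V : EuclideanSpace ℝ (Fin n) → ℝ) (hVc : Continuous V) (hVp : IsZnPeriodic V)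
    (p : EuclideanSpace ℝ (Fin n)) (lam : ℝ)
    (v : EuclideanSpace ℝ (Fin n) → ℝ) (hv : ContDiff ℝ 2 v) (hvp : IsZnPeriodic v)
    (hcell : ∀ x, -(1/2) * lap v x + (1/2) * ‖p + gradient v x‖^2 + V x = lam) :
    (1/2) * ‖p‖^2 + (⨅ x, V x) ≤ lam ∧ lam ≤ (1/2) * ‖p‖^2 + (⨆ x, V x) :=
  cell_problem_eigenvalue_bounds_general n V hVc hVp p lam v hv hvp hcell
end

section
/- Let n ≥ 1, let p ∈ ℝⁿ, let V : ℝⁿ → ℝ, let λ ∈ ℝ, and let r, s : ℝⁿ → ℝ be ℤⁿ-periodic C² functions with r > 0 and s > 0 everywhere, satisfying −(1/2)Δr(x) + p·∇r(x) − V(x)r(x) = λ r(x) for all x, and −(1/2)Δs(x) − p·∇s(x) − V(x)s(x) = μ s(x) for all x, for some μ ∈ ℝ. Then λ = μ. -/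
open scoped RealInnerProductSpace
open MeasureTheory

/-!
Write `L = -½Δ + p·∇ - V` and `L* = -½Δ - p·∇ - V` for its formal adjoint. By the product rule,
`s · L r - r · L* s` is the divergence of the field `r s p + ½ (r ∇s - s ∇r)`, the potential
cancelling. For eigenfunctions the left side is `(λ - μ) r s`; the right side is the divergence of
a `ℤⁿ`-periodic `C¹` field, whose integral over the unit cube vanishes because, in the divergence
theorem, the fluxes through opposite faces cancel. As `∫ r s > 0`, `λ = μ`.
-/

noncomputable section

variable {n : ℕ}

def partialDeriv (i : Fin n) (f : EuclideanSpace ℝ (Fin n) → ℝ) (x : EuclideanSpace ℝ (Fin n)) :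
    ℝ :=
  fderiv ℝ f x (EuclideanSpace.single i 1)

lemma lap_eq_sum_partialDeriv (f : EuclideanSpace ℝ (Fin n) → ℝ)
    (x : EuclideanSpace ℝ (Fin n)) : lap f x = ∑ i, partialDeriv i (partialDeriv i f) x :=
  rfl

lemma dvg_eq_sum_partialDeriv (F : EuclideanSpace ℝ (Fin n) → EuclideanSpace ℝ (Fin n))
    (x : EuclideanSpace ℝ (Fin n)) : dvg F x = ∑ i, partialDeriv i (fun y => F y i) x :=
  rfl

lemma gradient_apply (f : EuclideanSpace ℝ (Fin n) → ℝ) (x : EuclideanSpace ℝ (Fin n))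
    (i : Fin n) : gradient f x i = partialDeriv i f x := by
  rw [partialDeriv, ← inner_gradient_left, EuclideanSpace.inner_single_right]
  simp

lemma inner_gradient_eq_sum (p : EuclideanSpace ℝ (Fin n)) (f : EuclideanSpace ℝ (Fin n) → ℝ)
    (x : EuclideanSpace ℝ (Fin n)) : ⟪p, gradient f x⟫ = ∑ i, p i * partialDeriv i f x := by
  simp only [PiLp.inner_apply, gradient_apply, RCLike.inner_apply, conj_trivial, mul_comm]

lemma ContDiff.partialDeriv {f : EuclideanSpace ℝ (Fin n) → ℝ} {k m : WithTop ℕ∞}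
    (hf : ContDiff ℝ k f) (hmk : m + 1 ≤ k) (i : Fin n) : ContDiff ℝ m (partialDeriv i f) :=
  (hf.fderiv_right hmk).clm_apply contDiff_const

namespace IsZnPeriodic

variable {α : Type*}

lemma add_single {f : EuclideanSpace ℝ (Fin n) → α} (hf : IsZnPeriodic f)
    (x : EuclideanSpace ℝ (Fin n)) (i : Fin n) : f (x + EuclideanSpace.single i 1) = f x := by
  simpa [Pi.single_apply] using hf x (Pi.single i 1)

lemma fderiv {F : Type*} [NormedAddCommGroup F] [NormedSpace ℝ F]
    {f : EuclideanSpace ℝ (Fin n) → F} (hf : IsZnPeriodic f) : IsZnPeriodic (fderiv ℝ f) := by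
  intro x k
  rw [← fderiv_comp_add_right]
  exact congrArg (_root_.fderiv ℝ · x) (funext fun y => hf y k)

lemma gradient {f : EuclideanSpace ℝ (Fin n) → ℝ} (hf : IsZnPeriodic f) :
    IsZnPeriodic (gradient f) := fun x k => by
  simp only [_root_.gradient, hf.fderiv x k]

end IsZnPeriodic

def dualFlux (p : EuclideanSpace ℝ (Fin n)) (r s : EuclideanSpace ℝ (Fin n) → ℝ)
    (x : EuclideanSpace ℝ (Fin n)) : EuclideanSpace ℝ (Fin n) :=
  (r x * s x) • p + (2⁻¹ : ℝ) • (r x • gradient s x - s x • gradient r x)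

variable (p : EuclideanSpace ℝ (Fin n)) {r s : EuclideanSpace ℝ (Fin n) → ℝ}

lemma dualFlux_apply (x : EuclideanSpace ℝ (Fin n)) (i : Fin n) :
    dualFlux p r s x i =
      r x * s x * p i + 2⁻¹ * (r x * partialDeriv i s x - s x * partialDeriv i r x) := by
  simp [dualFlux, gradient_apply]

lemma IsZnPeriodic.dualFlux (hr : IsZnPeriodic r) (hs : IsZnPeriodic s) :
    IsZnPeriodic (dualFlux p r s) := fun x k => by
  simp only [_root_.dualFlux, hr x k, hs x k, hr.gradient x k, hs.gradient x k]

lemma contDiff_dualFlux (hr : ContDiff ℝ 2 r) (hs : ContDiff ℝ 2 s) :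
    ContDiff ℝ 1 (dualFlux p r s) := by
  refine (contDiff_piLp 2).2 fun i => ?_
  simp only [dualFlux_apply]
  have hr1 : ContDiff ℝ 1 r := hr.of_le (by norm_num)
  have hs1 : ContDiff ℝ 1 s := hs.of_le (by norm_num)
  have hDr := hr.partialDeriv (m := 1) (by norm_num) i
  have hDs := hs.partialDeriv (m := 1) (by norm_num) i
  fun_prop

lemma partialDeriv_dualFlux_apply (hr : ContDiff ℝ 2 r) (hs : ContDiff ℝ 2 s)
    (x : EuclideanSpace ℝ (Fin n)) (i : Fin n) :
    partialDeriv i (fun y => dualFlux p r s y i) x =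
      (partialDeriv i r x * s x + r x * partialDeriv i s x) * p i +
        2⁻¹ * (r x * partialDeriv i (partialDeriv i s) x -
          s x * partialDeriv i (partialDeriv i r) x) := by
  have hR := (hr.differentiable (by norm_num) x).hasFDerivAt
  have hS := (hs.differentiable (by norm_num) x).hasFDerivAt
  have hDR := ((hr.partialDeriv (by norm_num) i).differentiable one_ne_zero x).hasFDerivAt
  have hDS := ((hs.partialDeriv (by norm_num) i).differentiable one_ne_zero x).hasFDerivAt
  simp only [dualFlux_apply]
  rw [partialDeriv, (((hR.fun_mul hS).mul_const (p i)).fun_add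
    (((hR.fun_mul hDS).fun_sub (hS.fun_mul hDR)).const_mul 2⁻¹)).fderiv]
  simp only [add_apply, smul_apply, sub_apply, smul_eq_mul, partialDeriv]
  ring

lemma dvg_dualFlux (hr : ContDiff ℝ 2 r) (hs : ContDiff ℝ 2 s) (x : EuclideanSpace ℝ (Fin n)) :
    dvg (dualFlux p r s) x =
      s x * (-(1 / 2) * lap r x + ⟪p, gradient r x⟫) -
        r x * (-(1 / 2) * lap s x - ⟪p, gradient s x⟫) := by
  simp only [dvg_eq_sum_partialDeriv, partialDeriv_dualFlux_apply p hr hs, lap_eq_sum_partialDeriv,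
    inner_gradient_eq_sum, Finset.mul_sum, ← Finset.sum_add_distrib, ← Finset.sum_sub_distrib]
  exact Finset.sum_congr rfl fun i _ => by ring

lemma unitCube_eq_preimage_Icc : unitCube n = WithLp.ofLp ⁻¹' Set.Icc (0 : Fin n → ℝ) 1 := by
  ext x
  simp [unitCube, Pi.le_def, forall_and]

lemma setIntegral_unitCube {G : Type*} [NormedAddCommGroup G] [NormedSpace ℝ G]
    (f : EuclideanSpace ℝ (Fin n) → G) :
    ∫ x in unitCube n, f x = ∫ y in Set.Icc (0 : Fin n → ℝ) 1, f (WithLp.toLp 2 y) := by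
  rw [unitCube_eq_preimage_Icc]
  exact (PiLp.volume_preserving_ofLp (Fin n)).setIntegral_preimage_emb
    (MeasurableEquiv.toLp 2 (Fin n → ℝ)).symm.measurableEmbedding
    (fun y => f (WithLp.toLp 2 y)) _

lemma setIntegral_unitCube_pos {f : EuclideanSpace ℝ (Fin n) → ℝ} (hf : Continuous f)
    (hpos : ∀ x, 0 < f x) : 0 < ∫ x in unitCube n, f x := by
  have hc : Continuous fun y : Fin n → ℝ => f (WithLp.toLp 2 y) :=
    hf.comp (PiLp.continuous_toLp 2 _)
  rw [setIntegral_unitCube, setIntegral_pos_iff_support_of_nonneg_ae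
    (ae_of_all _ fun y => (hpos _).le) (hc.continuousOn.integrableOn_compact isCompact_Icc)]
  simp [Function.support, (hpos _).ne', Real.volume_Icc_pi]

lemma Fin.insertNth_one_eq_add_single {β : Type*} [AddMonoidWithOne β] {m : ℕ}
    (i : Fin (m + 1)) (z : Fin m → β) :
    i.insertNth (α := fun _ => β) 1 z = i.insertNth (α := fun _ => β) 0 z + Pi.single i 1 := by
  funext j
  rcases eq_or_ne j i with rfl | hj
  · simp
  · obtain ⟨k, rfl⟩ := Fin.exists_succAbove_eq hj
    simp

theorem integral_dvg_eq_zero_of_isZnPeriodic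
    {F : EuclideanSpace ℝ (Fin n) → EuclideanSpace ℝ (Fin n)} (hF : ContDiff ℝ 1 F)
    (hper : IsZnPeriodic F) : ∫ x in unitCube n, dvg F x = 0 := by
  cases n with
  | zero => simp [dvg]
  | succ m =>
    have hcomp : ∀ i, ContDiff ℝ 1 fun x => F x i := (contDiff_piLp 2).1 hF
    have hdvg_cont : Continuous (dvg F) := continuous_finsetSum _ fun i _ =>
      ((hcomp i).continuous_fderiv one_ne_zero).clm_apply continuous_const
    have key := integral_divergence_of_hasFDerivAt_off_countable' 0 1 zero_le_one
      (fun i y => F (WithLp.toLp 2 y) i)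
      (fun i y => (fderiv ℝ (fun x => F x i) (WithLp.toLp 2 y)).comp
        (PiLp.continuousLinearEquiv 2 ℝ (fun _ : Fin (m + 1) => ℝ)).symm.toContinuousLinearMap)
      ∅ Set.countable_empty
      (fun i => ((hcomp i).continuous.comp (PiLp.continuous_toLp 2 _)).continuousOn)
      (fun y _ i => ((hcomp i).differentiable one_ne_zero _).hasFDerivAt.comp y
        (PiLp.continuousLinearEquiv 2 ℝ (fun _ : Fin (m + 1) => ℝ)).symm.hasFDerivAt)
      ((hdvg_cont.comp (PiLp.continuous_toLp 2 _)).continuousOn.integrableOn_compact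
        isCompact_Icc)
    rw [setIntegral_unitCube]
    refine key.trans (Finset.sum_eq_zero fun i _ => sub_eq_zero.2 ?_)
    refine integral_congr_ae (ae_of_all _ fun z => ?_)
    change F (WithLp.toLp 2 (i.insertNth 1 z)) i = F (WithLp.toLp 2 (i.insertNth 0 z)) i
    rw [Fin.insertNth_one_eq_add_single, WithLp.toLp_add, PiLp.toLp_single, hper.add_single]

end

theorem dual_eigenvalues_equal_general (n : ℕ)
    (p : EuclideanSpace ℝ (Fin n)) (V : EuclideanSpace ℝ (Fin n) → ℝ) (lam mu : ℝ)
    (r s : EuclideanSpace ℝ (Fin n) → ℝ)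
    (hr : ContDiff ℝ 2 r) (hs : ContDiff ℝ 2 s)
    (hrp : IsZnPeriodic r) (hsp : IsZnPeriodic s)
    (hrpos : ∀ x, 0 < r x) (hspos : ∀ x, 0 < s x)
    (heq1 : ∀ x, -(1/2) * lap r x + ⟪p, gradient r x⟫ - V x * r x = lam * r x)
    (heq2 : ∀ x, -(1/2) * lap s x - ⟪p, gradient s x⟫ - V x * s x = mu * s x) :
    lam = mu := by
  have hdvg : ∀ x, dvg (dualFlux p r s) x = (lam - mu) * (r x * s x) := fun x => by
    rw [dvg_dualFlux p hr hs]
    linear_combination s x * heq1 x - r x * heq2 x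
  have hzero := integral_dvg_eq_zero_of_isZnPeriodic (contDiff_dualFlux p hr hs)
    (IsZnPeriodic.dualFlux p hrp hsp)
  have hpos := setIntegral_unitCube_pos (hr.continuous.mul hs.continuous)
    fun x => mul_pos (hrpos x) (hspos x)
  simp only [hdvg, integral_const_mul] at hzero
  exact sub_eq_zero.1 ((mul_eq_zero.1 hzero).resolve_right hpos.ne')

/-- two positive ℤⁿ-periodic C² eigenfunctions of the mutually dual
operators −(1/2)Δ + p·∇ − V and −(1/2)Δ − p·∇ − V have the same eigenvalue. -/
theorem dual_eigenvalues_equal (n : ℕ) (hn : 1 ≤ n)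
    (p : EuclideanSpace ℝ (Fin n)) (V : EuclideanSpace ℝ (Fin n) → ℝ) (lam mu : ℝ)
    (r s : EuclideanSpace ℝ (Fin n) → ℝ)
    (hr : ContDiff ℝ 2 r) (hs : ContDiff ℝ 2 s)
    (hrp : IsZnPeriodic r) (hsp : IsZnPeriodic s)
    (hrpos : ∀ x, 0 < r x) (hspos : ∀ x, 0 < s x)
    (heq1 : ∀ x, -(1/2) * lap r x + ⟪p, gradient r x⟫ - V x * r x = lam * r x)
    (heq2 : ∀ x, -(1/2) * lap s x - ⟪p, gradient s x⟫ - V x * s x = mu * s x) :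
    lam = mu :=
  dual_eigenvalues_equal_general n p V lam mu r s hr hs hrp hsp hrpos hspos heq1 heq2
end

section
/- Let n ≥ 1, let p ∈ ℝⁿ, let V : ℝⁿ → ℝ, let E ∈ ℝ, and let r, s : ℝⁿ → ℝ be C² functions with r > 0 everywhere, satisfying (1/2)Δr(x) − p·∇r(x) = −(V(x) + E) r(x) and (1/2)Δs(x) + p·∇s(x) = −(V(x) + E) s(x) for all x ∈ ℝⁿ. Then the product π := r·s satisfies (1/2)Δπ(x) + div((p − ∇r(x)/r(x)) π(x)) = 0 for all x ∈ ℝⁿ, where the divergence is div(F) = Σ_{i=1}^{n} ∂_i F_i applied to the vector field x ↦ (p − ∇r(x)/r(x)) π(x). -/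
open scoped RealInnerProductSpace
open MeasureTheory

/-!
Since `r > 0`, the vector field is `(r s) p - s ∇r`. The product rules
`Δ(r s) = s Δr + 2 ⟪∇r, ∇s⟫ + r Δs` and `div (φ G) = ⟪∇φ, G⟫ + φ div G`, together with
`div ∇r = Δr`, turn the left-hand side into `r (½ Δs + ⟪p, ∇s⟫) - s (½ Δr - ⟪p, ∇r⟫)`,
which vanishes by the two eigenvalue equations.
-/

section Gradient

variable {F : Type*} [NormedAddCommGroup F] [InnerProductSpace ℝ F] [CompleteSpace F]
  {f g : F → ℝ} {x : F}

theorem gradient_mul (hf : DifferentiableAt ℝ f x) (hg : DifferentiableAt ℝ g x) :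
    gradient (fun y => f y * g y) x = f x • gradient g x + g x • gradient f x := by
  refine HasGradientAt.gradient ?_
  rw [hasGradientAt_iff_hasFDerivAt, map_add, map_smul, map_smul, toDual_gradient, toDual_gradient]
  exact hf.hasFDerivAt.mul hg.hasFDerivAt

theorem ContDiff.differentiable_gradient (hf : ContDiff ℝ 2 f) :
    Differentiable ℝ (gradient f) :=
  (InnerProductSpace.toDual ℝ F).symm.differentiable.comp
    ((hf.fderiv_right (m := 1) (by norm_num)).differentiable one_ne_zero)

end Gradient

theorem EuclideanSpace.gradient_apply_single {n : ℕ} (f : EuclideanSpace ℝ (Fin n) → ℝ)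
    (x : EuclideanSpace ℝ (Fin n)) (i : Fin n) :
    gradient f x i = fderiv ℝ f x (EuclideanSpace.single i 1) := by
  rw [← inner_gradient_left, EuclideanSpace.inner_single_right, one_mul, conj_trivial]

section Divergence

open EuclideanSpace

variable {n : ℕ} {f g φ : EuclideanSpace ℝ (Fin n) → ℝ}
  {F G : EuclideanSpace ℝ (Fin n) → EuclideanSpace ℝ (Fin n)} {x : EuclideanSpace ℝ (Fin n)}

theorem dvg_gradient (f : EuclideanSpace ℝ (Fin n) → ℝ) : dvg (gradient f) = lap f := by
  funext x
  simp only [dvg, lap, gradient_apply_single]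

theorem dvg_add (hF : DifferentiableAt ℝ F x) (hG : DifferentiableAt ℝ G x) :
    dvg (fun y => F y + G y) x = dvg F x + dvg G x := by
  rw [differentiableAt_piLp] at hF hG
  simp only [dvg, PiLp.add_apply, fderiv_fun_add (hF _) (hG _), add_apply, Finset.sum_add_distrib]

theorem dvg_sub (hF : DifferentiableAt ℝ F x) (hG : DifferentiableAt ℝ G x) :
    dvg (fun y => F y - G y) x = dvg F x - dvg G x := by
  rw [differentiableAt_piLp] at hF hG
  simp only [dvg, PiLp.sub_apply, fderiv_fun_sub (hF _) (hG _), sub_apply, Finset.sum_sub_distrib]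

theorem dvg_smul (hφ : DifferentiableAt ℝ φ x) (hG : DifferentiableAt ℝ G x) :
    dvg (fun y => φ y • G y) x = ⟪gradient φ x, G x⟫ + φ x * dvg G x := by
  rw [differentiableAt_piLp] at hG
  simp only [dvg, PiLp.smul_apply, smul_eq_mul, fderiv_fun_mul hφ (hG _), add_apply, smul_apply,
    Finset.sum_add_distrib, Finset.mul_sum, PiLp.inner_apply, gradient_apply_single]
  rw [add_comm]
  simp only [RCLike.inner_apply, conj_trivial]

theorem dvg_smul_const (hφ : DifferentiableAt ℝ φ x) (v : EuclideanSpace ℝ (Fin n)) :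
    dvg (fun y => φ y • v) x = ⟪gradient φ x, v⟫ := by
  rw [dvg_smul hφ (differentiableAt_const v), add_eq_left]
  simp [dvg]

theorem lap_mul (hf : ContDiff ℝ 2 f) (hg : ContDiff ℝ 2 g) (x : EuclideanSpace ℝ (Fin n)) :
    lap (fun y => f y * g y) x
      = g x * lap f x + 2 * ⟪gradient f x, gradient g x⟫ + f x * lap g x := by
  have hf1 := hf.differentiable two_ne_zero
  have hg1 := hg.differentiable two_ne_zero
  have hf2 := hf.differentiable_gradient x
  have hg2 := hg.differentiable_gradient x
  have hgrad : gradient (fun y => f y * g y) = fun y => f y • gradient g y + g y • gradient f y :=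
    funext fun y => gradient_mul (hf1 y) (hg1 y)
  rw [← dvg_gradient, hgrad, dvg_add ((hf1 x).fun_smul hg2) ((hg1 x).fun_smul hf2),
    dvg_smul (hf1 x) hg2, dvg_smul (hg1 x) hf2, dvg_gradient, dvg_gradient,
    real_inner_comm (gradient g x)]
  ring

end Divergence

theorem product_is_invariant_density_general (n : ℕ)
    (p : EuclideanSpace ℝ (Fin n)) (V : EuclideanSpace ℝ (Fin n) → ℝ) (E : ℝ)
    (r s : EuclideanSpace ℝ (Fin n) → ℝ)
    (hr : ContDiff ℝ 2 r) (hs : ContDiff ℝ 2 s)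
    (hrpos : ∀ x, 0 < r x)
    (heqr : ∀ x, (1/2) * lap r x - ⟪p, gradient r x⟫ = -(V x + E) * r x)
    (heqs : ∀ x, (1/2) * lap s x + ⟪p, gradient s x⟫ = -(V x + E) * s x) :
    ∀ x, (1/2) * lap (fun y => r y * s y) x
        + dvg (fun y => (r y * s y) • (p - (r y)⁻¹ • gradient r y)) x = 0 := by
  intro x
  have hr1 := hr.differentiable two_ne_zero
  have hs1 := hs.differentiable two_ne_zero
  have hrs : DifferentiableAt ℝ (fun y => r y * s y) x := (hr1 x).fun_mul (hs1 x)
  have hr2 := hr.differentiable_gradient x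
  have hfield : (fun y => (r y * s y) • (p - (r y)⁻¹ • gradient r y))
      = fun y => (r y * s y) • p - s y • gradient r y := by
    funext y
    rw [smul_sub, smul_smul, mul_comm (r y), mul_assoc, mul_inv_cancel₀ (hrpos y).ne', mul_one]
  rw [hfield, dvg_sub (hrs.fun_smul (differentiableAt_const p)) ((hs1 x).fun_smul hr2),
    dvg_smul_const hrs, gradient_mul (hr1 x) (hs1 x), dvg_smul (hs1 x) hr2, dvg_gradient,
    lap_mul hr hs, inner_add_left, inner_smul_left, inner_smul_left,
    real_inner_comm (gradient s x), real_inner_comm p, real_inner_comm p]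
  simp only [conj_trivial]
  linear_combination r x * heqs x - s x * heqr x

/-- the product π = r·s of the two tilted eigenfunctions solves the
stationary Fokker–Planck equation (1/2)Δπ + div((p − ∇r/r)π) = 0. -/
theorem product_is_invariant_density (n : ℕ) (hn : 1 ≤ n)
    (p : EuclideanSpace ℝ (Fin n)) (V : EuclideanSpace ℝ (Fin n) → ℝ) (E : ℝ)
    (r s : EuclideanSpace ℝ (Fin n) → ℝ)
    (hr : ContDiff ℝ 2 r) (hs : ContDiff ℝ 2 s)
    (hrpos : ∀ x, 0 < r x)
    (heqr : ∀ x, (1/2) * lap r x - ⟪p, gradient r x⟫ = -(V x + E) * r x)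
    (heqs : ∀ x, (1/2) * lap s x + ⟪p, gradient s x⟫ = -(V x + E) * s x) :
    ∀ x, (1/2) * lap (fun y => r y * s y) x
        + dvg (fun y => (r y * s y) • (p - (r y)⁻¹ • gradient r y)) x = 0 :=
  product_is_invariant_density_general n p V E r s hr hs hrpos heqr heqs
end

section
/- Let n ≥ 1 and K ≥ 1, and let L : ℝⁿ → ℝ be a C² function whose Hessian satisfies |ξ|² ≤ ξ·D²L(z)ξ ≤ K|ξ|² for all z, ξ ∈ ℝⁿ. Let g : ℝⁿ → ℝ, let x₀, y₀ ∈ ℝⁿ, and let u : ℝⁿ → ℝ satisfy: (i) u(x) ≤ g(y) + L(x − y) for all x, y ∈ ℝⁿ; (ii) u(x₀) = g(y₀) + L(x₀ − y₀); (iii) g(y) + L(x₀ − y) > g(y₀) + L(x₀ − y₀) for all y ≠ y₀; and (iv) there exist C₀, ρ > 0 such that, with p₀ := ∇L(x₀ − y₀), one has |u(x) − u(x₀) − p₀·(x − x₀)| ≤ C₀|x − x₀|² whenever |x − x₀| ≤ ρ. Then there exist δ > 0 and r > 0 such that g(y) + L(x₀ − y) ≥ g(y₀) + L(x₀ − y₀)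 + δ|y − y₀|² for all y with |y − y₀| ≤ r. -/
open scoped RealInnerProductSpace
open MeasureTheory

/-!
Write `φ y = g y + L (x₀ - y)`, `d = y - y₀` and test the expansion of `u` at `x = x₀ + t d`.
From below, `u x ≥ φ y₀ + t ⟪∇L (x₀ - y₀), d⟫ - C₀ t² ‖d‖²`; from above, by the Hopf–Lax bound
with competitor `y` and the second-order Taylor bound `D²L ≤ K`,
`u x ≤ φ y + t ⟪∇L (x₀ - y), d⟫ + (K / 2) t² ‖d‖²`. Strong monotonicity of `∇L`, coming from
`D²L ≥ 1`, gives `⟪∇L (x₀ - y₀) - ∇L (x₀ - y), d⟫ ≥ ‖d‖²`, so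
`φ y ≥ φ y₀ + (t - (C₀ + K / 2) t²) ‖d‖²`, and a small fixed `t` gives quadratic growth.
-/

theorem le_add_deriv_add_half_of_deriv2_le {f f' f'' : ℝ → ℝ} {M : ℝ}
    (hf : ∀ s, HasDerivAt f (f' s) s) (hf' : ∀ s, HasDerivAt f' (f'' s) s)
    (hM : ∀ s, f'' s ≤ M) : f 1 ≤ f 0 + f' 0 + M / 2 := by
  set g : ℝ → ℝ := fun s => f s - f' 0 * s - M / 2 * s ^ 2
  have hg : ∀ s, HasDerivAt g (f' s - f' 0 - M * s) s := fun s =>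
    (((hf s).fun_sub ((hasDerivAt_id' s).const_mul (f' 0))).fun_sub
      ((hasDerivAt_pow 2 s).const_mul (M / 2))).congr_deriv (by ring)
  have hg_anti : AntitoneOn g (Set.Ici 0) := by
    refine antitoneOn_of_deriv_nonpos (convex_Ici 0)
      (fun s _ => (hg s).continuousAt.continuousWithinAt)
      (fun s _ => (hg s).differentiableAt.differentiableWithinAt) fun s hs => ?_
    rw [interior_Ici] at hs
    have := image_sub_le_mul_sub_of_deriv_le (fun s => (hf' s).differentiableAt)
      (fun s => (hf' s).deriv ▸ hM s) (le_of_lt hs)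
    rw [(hg s).deriv]
    linarith
  have := hg_anti Set.self_mem_Ici (Set.mem_Ici.2 zero_le_one) zero_le_one
  simp only [g] at this
  linarith

section

variable {E : Type*} [NormedAddCommGroup E] [NormedSpace ℝ E] {L : E → ℝ}

theorem hasDerivAt_comp_add_smul (hL : Differentiable ℝ L) (b h : E) (s : ℝ) :
    HasDerivAt (fun s : ℝ => L (b + s • h)) (fderiv ℝ L (b + s • h) h) s := by
  have hline : HasDerivAt (fun s : ℝ => b + s • h) h s := by
    simpa using ((hasDerivAt_id s).smul_const h).const_add b
  exact (hL _).hasFDerivAt.comp_hasDerivAt s hline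

theorem hasDerivAt_fderiv_apply_comp_add_smul (hL : Differentiable ℝ (fderiv ℝ L)) (b h : E)
    (s : ℝ) :
    HasDerivAt (fun s : ℝ => fderiv ℝ L (b + s • h) h)
      (fderiv ℝ (fderiv ℝ L) (b + s • h) h h) s := by
  have hline : HasDerivAt (fun s : ℝ => b + s • h) h s := by
    simpa using ((hasDerivAt_id s).smul_const h).const_add b
  simpa using ((hL _).hasFDerivAt.comp_hasDerivAt s hline).clm_apply (hasDerivAt_const s h)

theorem ContDiff.fderiv_apply_sub_add_le (hL : ContDiff ℝ 2 L) {m : ℝ}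
    (hm : ∀ z ξ, m * ‖ξ‖ ^ 2 ≤ fderiv ℝ (fderiv ℝ L) z ξ ξ) (a b : E) :
    fderiv ℝ L b (a - b) + m * ‖a - b‖ ^ 2 ≤ fderiv ℝ L a (a - b) := by
  have hL' := (hL.fderiv_right (m := 1) (by norm_num)).differentiable one_ne_zero
  have := mul_sub_le_image_sub_of_le_deriv
    (fun s => (hasDerivAt_fderiv_apply_comp_add_smul hL' b (a - b) s).differentiableAt)
    (fun s => (hasDerivAt_fderiv_apply_comp_add_smul hL' b (a - b) s).deriv ▸ hm _ _)
    zero_le_one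
  simp only [zero_smul, add_zero, one_smul, add_sub_cancel] at this
  linarith

theorem ContDiff.le_add_fderiv_add_of_hessian_le (hL : ContDiff ℝ 2 L) {K : ℝ}
    (hK : ∀ z ξ, fderiv ℝ (fderiv ℝ L) z ξ ξ ≤ K * ‖ξ‖ ^ 2) (b h : E) :
    L (b + h) ≤ L b + fderiv ℝ L b h + K / 2 * ‖h‖ ^ 2 := by
  have := le_add_deriv_add_half_of_deriv2_le
    (hasDerivAt_comp_add_smul (hL.differentiable two_ne_zero) b h)
    (hasDerivAt_fderiv_apply_comp_add_smul
      ((hL.fderiv_right (m := 1) (by norm_num)).differentiable one_ne_zero) b h)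
    (fun s => hK _ h)
  simp only [zero_smul, add_zero, one_smul] at this
  linarith

theorem ContDiff.add_mul_sq_le_of_infConvolution_expansion (hL : ContDiff ℝ 2 L)
    {g u : E → ℝ} {m K C₀ ρ t : ℝ} {x₀ y₀ : E}
    (hm : ∀ z ξ, m * ‖ξ‖ ^ 2 ≤ fderiv ℝ (fderiv ℝ L) z ξ ξ)
    (hK : ∀ z ξ, fderiv ℝ (fderiv ℝ L) z ξ ξ ≤ K * ‖ξ‖ ^ 2)
    (hub : ∀ x y, u x ≤ g y + L (x - y)) (hattain : u x₀ = g y₀ + L (x₀ - y₀))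
    (hlower : ∀ x, ‖x - x₀‖ ≤ ρ →
      u x₀ + fderiv ℝ L (x₀ - y₀) (x - x₀) - C₀ * ‖x - x₀‖ ^ 2 ≤ u x)
    (ht : 0 ≤ t) {y : E} (hy : t * ‖y - y₀‖ ≤ ρ) :
    g y₀ + L (x₀ - y₀) + (m * t - (C₀ + K / 2) * t ^ 2) * ‖y - y₀‖ ^ 2 ≤ g y + L (x₀ - y) := by
  set d := y - y₀
  have hnorm : ‖t • d‖ = t * ‖d‖ := by rw [norm_smul, Real.norm_of_nonneg ht]
  have lower := hlower (x₀ + t • d) (by rwa [add_sub_cancel_left, hnorm])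
  have upper : L (x₀ + t • d - y) ≤
      L (x₀ - y) + fderiv ℝ L (x₀ - y) (t • d) + K / 2 * ‖t • d‖ ^ 2 := by
    rw [add_sub_right_comm]
    exact hL.le_add_fderiv_add_of_hessian_le hK _ _
  have mono := hL.fderiv_apply_sub_add_le hm (x₀ - y₀) (x₀ - y)
  rw [sub_sub_sub_cancel_left] at mono
  simp only [add_sub_cancel_left, hnorm, map_smul, smul_eq_mul] at lower upper
  nlinarith [hub (x₀ + t • d) y, mul_le_mul_of_nonneg_left mono ht]

end

theorem hopf_lax_nondegeneracy_general (n : ℕ) (K : ℝ) (hK : 1 ≤ K)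
    (L : EuclideanSpace ℝ (Fin n) → ℝ) (hL : ContDiff ℝ 2 L)
    (hHess : ∀ z ξ : EuclideanSpace ℝ (Fin n),
      ‖ξ‖^2 ≤ fderiv ℝ (fderiv ℝ L) z ξ ξ ∧ fderiv ℝ (fderiv ℝ L) z ξ ξ ≤ K * ‖ξ‖^2)
    (g u : EuclideanSpace ℝ (Fin n) → ℝ) (x₀ y₀ : EuclideanSpace ℝ (Fin n))
    (hub : ∀ x y, u x ≤ g y + L (x - y))
    (hattain : u x₀ = g y₀ + L (x₀ - y₀))
    (C₀ ρ : ℝ) (hC₀ : 0 < C₀) (hρ : 0 < ρ)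
    (htwice : ∀ x, ‖x - x₀‖ ≤ ρ →
      |u x - u x₀ - ⟪gradient L (x₀ - y₀), x - x₀⟫| ≤ C₀ * ‖x - x₀‖^2) :
    ∃ δ > 0, ∃ r > 0, ∀ y, ‖y - y₀‖ ≤ r →
      g y + L (x₀ - y) ≥ g y₀ + L (x₀ - y₀) + δ * ‖y - y₀‖^2 := by
  set C := C₀ + K / 2
  have hC : 0 < C := add_pos_of_pos_of_nonneg hC₀ (by linarith)
  have hlower : ∀ x, ‖x - x₀‖ ≤ ρ →
      u x₀ + fderiv ℝ L (x₀ - y₀) (x - x₀) - C₀ * ‖x - x₀‖ ^ 2 ≤ u x := fun x hx => by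
    have := (abs_le.1 (htwice x hx)).1
    rw [inner_gradient_left] at this
    linarith
  -- `t - C t²` is maximised at `t = 1 / (2C)`.
  refine ⟨1 / (4 * C), by positivity, 2 * C * ρ, by positivity, fun y hy => ?_⟩
  have key := hL.add_mul_sq_le_of_infConvolution_expansion (m := 1) (t := 1 / (2 * C))
    (fun z ξ => by simpa using (hHess z ξ).1) (fun z ξ => (hHess z ξ).2) hub hattain hlower
    (by positivity) (y := y) (by rw [div_mul_eq_mul_div, div_le_iff₀ (by positivity)]; linarith)
  have hrate : 1 * (1 / (2 * C)) - C * (1 / (2 * C)) ^ 2 = 1 / (4 * C) := by field_simp; ring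
  rw [hrate] at key
  exact key

/-- nondegeneracy lemma: if L is C² with I ≤ D²L ≤ K·I, u is the
Hopf–Lax lower bound of the competitors g(y) + L(x−y) with a unique minimizer y₀
at x₀, and u admits a second-order expansion at x₀ with gradient ∇L(x₀ − y₀),
then y ↦ g(y) + L(x₀ − y) grows at least quadratically near y₀. -/
theorem hopf_lax_nondegeneracy (n : ℕ) (hn : 1 ≤ n) (K : ℝ) (hK : 1 ≤ K)
    (L : EuclideanSpace ℝ (Fin n) → ℝ) (hL : ContDiff ℝ 2 L)
    (hHess : ∀ z ξ : EuclideanSpace ℝ (Fin n),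
      ‖ξ‖^2 ≤ fderiv ℝ (fderiv ℝ L) z ξ ξ ∧ fderiv ℝ (fderiv ℝ L) z ξ ξ ≤ K * ‖ξ‖^2)
    (g u : EuclideanSpace ℝ (Fin n) → ℝ) (x₀ y₀ : EuclideanSpace ℝ (Fin n))
    (hub : ∀ x y, u x ≤ g y + L (x - y))
    (hattain : u x₀ = g y₀ + L (x₀ - y₀))
    (huniq : ∀ y, y ≠ y₀ → g y₀ + L (x₀ - y₀) < g y + L (x₀ - y))
    (C₀ ρ : ℝ) (hC₀ : 0 < C₀) (hρ : 0 < ρ)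
    (htwice : ∀ x, ‖x - x₀‖ ≤ ρ →
      |u x - u x₀ - ⟪gradient L (x₀ - y₀), x - x₀⟫| ≤ C₀ * ‖x - x₀‖^2) :
    ∃ δ > 0, ∃ r > 0, ∀ y, ‖y - y₀‖ ≤ r →
      g y + L (x₀ - y) ≥ g y₀ + L (x₀ - y₀) + δ * ‖y - y₀‖^2 :=
  hopf_lax_nondegeneracy_general n K hK L hL hHess g u x₀ y₀ hub hattain C₀ ρ hC₀ hρ htwice
end

section
/- Let n ≥ 1, let G ≥ 0 and M ≥ 0, let g : ℝⁿ → ℝ be Lipschitz with constant G, and let L : ℝⁿ → ℝ satisfy (1/2)|q|² − M ≤ L(q) ≤ (1/2)|q|² + M for all q ∈ ℝⁿ. Fix x ∈ ℝⁿ, set h(y) := g(y) + L(x − y), and let ȳ be a minimizer of h over ℝⁿ. Then there exists R₀ > 0 depending only on G and M such that h(y) − h(ȳ) ≥ (1/4)|y − ȳ|² for every y with |y − ȳ| ≥ R₀. -/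
open scoped RealInnerProductSpace
open MeasureTheory

set_option maxHeartbeats 1000000 in
/-- tail gap estimate: there is R₀ > 0 depending only on G and M such
that, for any G-Lipschitz g, any L with (1/2)|q|² − M ≤ L(q) ≤ (1/2)|q|² + M, and
any minimizer ȳ of h(y) = g(y) + L(x − y), one has
h(y) − h(ȳ) ≥ (1/4)|y − ȳ|² whenever |y − ȳ| ≥ R₀. -/
theorem hopf_lax_tail_gap (G M : ℝ) (hG : 0 ≤ G) (hM : 0 ≤ M) :
    ∃ R₀ > (0 : ℝ), ∀ (n : ℕ), 1 ≤ n →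
      ∀ (g : EuclideanSpace ℝ (Fin n) → ℝ), (∀ x y, |g x - g y| ≤ G * ‖x - y‖) →
      ∀ (L : EuclideanSpace ℝ (Fin n) → ℝ),
        (∀ q, (1/2) * ‖q‖^2 - M ≤ L q ∧ L q ≤ (1/2) * ‖q‖^2 + M) →
      ∀ (x ybar : EuclideanSpace ℝ (Fin n)),
        (∀ y, g ybar + L (x - ybar) ≤ g y + L (x - y)) →
      ∀ y, R₀ ≤ ‖y - ybar‖ →
        (g y + L (x - y)) - (g ybar + L (x - ybar)) ≥ (1/4) * ‖y - ybar‖^2 := by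
  set s := Real.sqrt M with hs
  set w := Real.sqrt (G^2 + 4*M) with hw
  have hs0 : 0 ≤ s := Real.sqrt_nonneg _
  have hw0 : 0 ≤ w := Real.sqrt_nonneg _
  have hs2 : s^2 = M := Real.sq_sqrt hM
  have hw2 : w^2 = G^2 + 4*M := Real.sq_sqrt (by positivity)
  refine ⟨8*(G + (G + w)) + 4*s + 1, by nlinarith, ?_⟩
  intro n hn g hg L hL x ybar hmin y hy
  set r := ‖x - ybar‖ with hr
  set t := ‖y - ybar‖ with ht
  have hr0 : 0 ≤ r := norm_nonneg _
  have ht0 : 0 ≤ t := norm_nonneg _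
  -- bound on r
  have hmx := hmin x
  have hL1 := (hL (x - ybar)).1
  have hL2 := (hL (x - x)).2
  have hxx : ‖x - x‖ = 0 := by simp
  rw [hxx] at hL2
  have hgx : g x - g ybar ≤ G * r := le_trans (le_abs_self _) (hg x ybar)
  have hrG : (r - G)^2 ≤ G^2 + 4*M := by nlinarith
  have hrb : r ≤ G + w := by
    have h1 : r - G ≤ |r - G| := le_abs_self _
    have h2 : |r - G| ≤ w := by
      rw [hw, ← Real.sqrt_sq_eq_abs]
      exact Real.sqrt_le_sqrt hrG
    linarith
  -- t ≥ R₀ > r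
  have htr : r + 1 ≤ t := by nlinarith
  -- ‖x - y‖ ≥ t - r
  have htri : t ≤ ‖x - y‖ + r := by
    have he : y - ybar = (y - x) + (x - ybar) := by abel
    calc t = ‖(y - x) + (x - ybar)‖ := by rw [ht, he]
    _ ≤ ‖y - x‖ + ‖x - ybar‖ := norm_add_le _ _
    _ = ‖x - y‖ + r := by rw [norm_sub_rev]
  have hxy2 : (t - r)^2 ≤ ‖x - y‖^2 := by
    have h1 : 0 ≤ t - r := by linarith
    have h2 : t - r ≤ ‖x - y‖ := by linarith
    exact pow_le_pow_left₀ h1 h2 2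
  -- pieces
  have hLy := (hL (x - y)).1
  have hLyb := (hL (x - ybar)).2
  have hgy : g ybar - g y ≤ G * t := by
    have := hg ybar y
    rw [norm_sub_rev] at this
    exact le_trans (le_abs_self _) this
  have key : (G + r) * t + 2 * s^2 ≤ (1/4) * t^2 := by
    have k1 : (0:ℝ) ≤ t * (t - 8*(G + r)) :=
      mul_nonneg ht0 (by linarith)
    have k2 : (0:ℝ) ≤ s * (t - 4*s) := mul_nonneg hs0 (by linarith)
    nlinarith [sq_nonneg (t - 4*s)]
  nlinarith [key, hxy2, hLy, hLyb, hgy, hgx, hL1]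
end

section
/- Let n ≥ 1, let A > 0, 0 < r ≤ R, and let ȳ ∈ ℝⁿ be such that the closed ball B(ȳ, r) is contained in the closed ball B(0, R). Let φ : ℝⁿ → ℝ be measurable with φ(y) ≥ 0 for all y ∈ B(0, R) and φ(y) ≤ A|y − ȳ| for all y ∈ B(ȳ, r). Then there exists a constant C > 0, depending only on n, A, r, R, such that for every ε ∈ (0, 1], the integral I(ε) := ∫_{B(0,R)} e^{−φ(y)/ε} dy satisfies | ε log( ε^{−n/2} I(ε) ) | ≤ ε ( C + (n/2) |log ε| ). -/
/-!
Since `φ ≥ 0` on `B(0, R)`, the integrand is at most `1` there, so `I(ε) ≤ |B(0, R)|`.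
Since `φ(y) ≤ A |y - ȳ|`, the integrand is at least `e^{-A r}` on the shrunken ball `B(ȳ, ε r)`,
whose volume is `εⁿ |B(0, r)|`; hence `I(ε) ≥ e^{-A r} |B(0, r)| εⁿ`. Thus `log I(ε)` lies between
`n log ε - O(1)` and `O(1)`, and subtracting `(n/2) log ε` leaves at most `(n/2) |log ε| + O(1)`.
-/

open scoped RealInnerProductSpace
open MeasureTheory

open Metric Module Real

theorem exp_neg_div_le_one {t ε : ℝ} (ht : 0 ≤ t) (hε : 0 ≤ ε) : exp (-t / ε) ≤ 1 :=
  exp_le_one_iff.2 (div_nonpos_of_nonpos_of_nonneg (neg_nonpos.2 ht) hε)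

section MeasureSpace

variable {X : Type*} [MeasurableSpace X] {μ : Measure X} {s : Set X} {φ : X → ℝ} {ε : ℝ}

theorem setIntegral_exp_neg_div_le_measureReal (hs : μ s < ⊤) (hε : 0 ≤ ε)
    (hφ : ∀ y ∈ s, 0 ≤ φ y) : ∫ y in s, exp (-φ y / ε) ∂μ ≤ μ.real s := by
  have hbound : ∀ y ∈ s, ‖exp (-φ y / ε)‖ ≤ 1 := fun y hy => by
    simpa [norm_of_nonneg (exp_pos _).le] using exp_neg_div_le_one (hφ y hy) hε
  simpa using (le_abs_self _).trans (norm_setIntegral_le_of_norm_le_const hs hbound)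

theorem integrableOn_exp_neg_div (hφm : Measurable φ) (hsm : MeasurableSet s) (hs : μ s < ⊤)
    (hε : 0 ≤ ε) (hφ : ∀ y ∈ s, 0 ≤ φ y) : IntegrableOn (fun y => exp (-φ y / ε)) s μ := by
  refine Measure.integrableOn_of_bounded (M := 1) hs.ne
    (measurable_exp.comp (hφm.neg.div_const ε)).aestronglyMeasurable ?_
  filter_upwards [ae_restrict_mem hsm] with y hy
  simpa [norm_of_nonneg (exp_pos _).le] using exp_neg_div_le_one (hφ y hy) hε

end MeasureSpace

section MetricSpace

variable {X : Type*} [PseudoMetricSpace X] [MeasurableSpace X] [OpensMeasurableSpace X]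
  {μ : Measure X} {s : Set X} {φ : X → ℝ} {x : X} {A ρ ε : ℝ}

theorem exp_neg_mul_div_mul_measureReal_closedBall_le_setIntegral (hA : 0 ≤ A) (hε : 0 < ε)
    (hball : closedBall x ρ ⊆ s) (hsm : MeasurableSet s) (hs : μ s < ⊤) (hφm : Measurable φ)
    (hφ0 : ∀ y ∈ s, 0 ≤ φ y) (hφA : ∀ y ∈ closedBall x ρ, φ y ≤ A * dist y x) :
    exp (-(A * ρ / ε)) * μ.real (closedBall x ρ) ≤ ∫ y in s, exp (-φ y / ε) ∂μ := by
  have hint := integrableOn_exp_neg_div hφm hsm hs hε.le hφ0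
  calc exp (-(A * ρ / ε)) * μ.real (closedBall x ρ)
      ≤ ∫ y in closedBall x ρ, exp (-φ y / ε) ∂μ := by
        refine setIntegral_ge_of_const_le_real measurableSet_closedBall
          ((measure_mono hball).trans_lt hs).ne (fun y hy => ?_) (hint.mono_set hball)
        rw [exp_le_exp, neg_div, neg_le_neg_iff]
        gcongr
        exact (hφA y hy).trans (mul_le_mul_of_nonneg_left (mem_closedBall.1 hy) hA)
    _ ≤ ∫ y in s, exp (-φ y / ε) ∂μ :=
        setIntegral_mono_set hint (.of_forall fun y => (exp_pos _).le) (LE.le.eventuallyLE hball)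

end MetricSpace

section AddHaar

variable {E : Type*} [NormedAddCommGroup E] [NormedSpace ℝ E] [MeasurableSpace E] [BorelSpace E]
  [FiniteDimensional ℝ E] (μ : Measure E) [μ.IsAddHaarMeasure]

theorem addHaar_real_closedBall_mul (x : E) {r : ℝ} (hr : 0 ≤ r) {s : ℝ} (hs : 0 ≤ s) :
    μ.real (closedBall x (r * s)) = r ^ finrank ℝ E * μ.real (closedBall 0 s) := by
  rw [measureReal_def, Measure.addHaar_closedBall_mul μ x hr hs, ENNReal.toReal_mul,
    ENNReal.toReal_ofReal (by positivity), measureReal_def]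

theorem exp_neg_mul_mul_measureReal_closedBall_mul_pow_le_setIntegral {s : Set E} {φ : E → ℝ}
    {x : E} {A r ε : ℝ} (hA : 0 ≤ A) (hr : 0 ≤ r) (hε0 : 0 < ε) (hε1 : ε ≤ 1)
    (hball : closedBall x r ⊆ s) (hsm : MeasurableSet s) (hs : μ s < ⊤) (hφm : Measurable φ)
    (hφ0 : ∀ y ∈ s, 0 ≤ φ y) (hφA : ∀ y ∈ closedBall x r, φ y ≤ A * ‖y - x‖) :
    exp (-(A * r)) * μ.real (closedBall 0 r) * ε ^ finrank ℝ E ≤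
      ∫ y in s, exp (-φ y / ε) ∂μ := by
  have hshrink : closedBall x (ε * r) ⊆ closedBall x r :=
    closedBall_subset_closedBall (mul_le_of_le_one_left hr hε1)
  calc exp (-(A * r)) * μ.real (closedBall 0 r) * ε ^ finrank ℝ E
      = exp (-(A * (ε * r) / ε)) * μ.real (closedBall x (ε * r)) := by
        rw [addHaar_real_closedBall_mul μ x hε0.le hr, mul_left_comm, mul_div_assoc,
          mul_div_cancel_left₀ _ hε0.ne']
        ring
    _ ≤ ∫ y in s, exp (-φ y / ε) ∂μ :=
        exp_neg_mul_div_mul_measureReal_closedBall_le_setIntegral hA hε0 (hshrink.trans hball)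
          hsm hs hφm hφ0 fun y hy => by simpa [dist_eq_norm] using hφA y (hshrink hy)

end AddHaar

theorem abs_log_rpow_neg_half_mul_le {d : ℕ} {a b ε I : ℝ} (ha : 0 < a) (hε0 : 0 < ε)
    (hε1 : ε ≤ 1) (hlow : a * ε ^ d ≤ I) (hup : I ≤ b) :
    |log (ε ^ (-(d : ℝ) / 2) * I)| ≤ |log a| + |log b| + d / 2 * |log ε| := by
  have hI : 0 < I := lt_of_lt_of_le (by positivity) hlow
  have hlogε : |log ε| = -log ε := abs_of_nonpos (log_nonpos hε0.le hε1)
  have hlogI_le : log I ≤ log b := log_le_log hI hup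
  have hle_logI : log a + d * log ε ≤ log I := by
    simpa [log_mul ha.ne' (pow_pos hε0 d).ne', log_pow] using log_le_log (by positivity) hlow
  rw [log_mul (rpow_pos_of_pos hε0 _).ne' hI.ne', log_rpow hε0, abs_le, hlogε]
  constructor <;> linarith [le_abs_self (log b), neg_abs_le (log a), abs_nonneg (log a),
    abs_nonneg (log b)]

theorem laplace_estimate_lipschitz_general (n : ℕ) (A r R : ℝ)
    (hA : 0 < A) (hr : 0 < r) :
    ∃ C > (0 : ℝ), ∀ (ybar : EuclideanSpace ℝ (Fin n)) (φ : EuclideanSpace ℝ (Fin n) → ℝ),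
      Metric.closedBall ybar r ⊆ Metric.closedBall 0 R →
      Measurable φ →
      (∀ y ∈ Metric.closedBall (0 : EuclideanSpace ℝ (Fin n)) R, 0 ≤ φ y) →
      (∀ y ∈ Metric.closedBall ybar r, φ y ≤ A * ‖y - ybar‖) →
      ∀ ε : ℝ, ε ∈ Set.Ioc (0 : ℝ) 1 →
        |ε * Real.log (ε ^ (-(n : ℝ)/2) *
            ∫ y in Metric.closedBall (0 : EuclideanSpace ℝ (Fin n)) R,
              Real.exp (-(φ y)/ε))|
          ≤ ε * (C + ((n : ℝ)/2) * |Real.log ε|) := by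
  set a := exp (-(A * r)) * volume.real (closedBall (0 : EuclideanSpace ℝ (Fin n)) r)
  set b := volume.real (closedBall (0 : EuclideanSpace ℝ (Fin n)) R)
  have ha : 0 < a := mul_pos (exp_pos _)
    (ENNReal.toReal_pos (measure_closedBall_pos volume 0 hr).ne' measure_closedBall_lt_top.ne)
  refine ⟨|log a| + |log b| + 1, by positivity, ?_⟩
  rintro ybar φ hball hφm hφ0 hφA ε ⟨hε0, hε1⟩
  have hlow := exp_neg_mul_mul_measureReal_closedBall_mul_pow_le_setIntegral volume hA.le hr.le
    hε0 hε1 hball measurableSet_closedBall measure_closedBall_lt_top hφm hφ0 hφA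
  rw [finrank_euclideanSpace_fin] at hlow
  have hup := setIntegral_exp_neg_div_le_measureReal (μ := volume) measure_closedBall_lt_top
    hε0.le hφ0
  have hlog := abs_log_rpow_neg_half_mul_le ha hε0 hε1 hlow hup
  rw [abs_mul, abs_of_pos hε0]
  gcongr
  linarith

/-- Laplace estimate, Lipschitz exponent: if φ ≥ 0 on B(0,R) and
φ(y) ≤ A|y − ȳ| on B(ȳ,r) ⊆ B(0,R), then for I(ε) = ∫_{B(0,R)} e^{−φ/ε},
|ε log(ε^{−n/2} I(ε))| ≤ ε (C + (n/2)|log ε|) with C depending only on n, A, r, R. -/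
theorem laplace_estimate_lipschitz (n : ℕ) (hn : 1 ≤ n) (A r R : ℝ)
    (hA : 0 < A) (hr : 0 < r) (hrR : r ≤ R) :
    ∃ C > (0 : ℝ), ∀ (ybar : EuclideanSpace ℝ (Fin n)) (φ : EuclideanSpace ℝ (Fin n) → ℝ),
      Metric.closedBall ybar r ⊆ Metric.closedBall 0 R →
      Measurable φ →
      (∀ y ∈ Metric.closedBall (0 : EuclideanSpace ℝ (Fin n)) R, 0 ≤ φ y) →
      (∀ y ∈ Metric.closedBall ybar r, φ y ≤ A * ‖y - ybar‖) →
      ∀ ε : ℝ, ε ∈ Set.Ioc (0 : ℝ) 1 →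
        |ε * Real.log (ε ^ (-(n : ℝ)/2) *
            ∫ y in Metric.closedBall (0 : EuclideanSpace ℝ (Fin n)) R,
              Real.exp (-(φ y)/ε))|
          ≤ ε * (C + ((n : ℝ)/2) * |Real.log ε|) :=
  laplace_estimate_lipschitz_general n A r R hA hr
end
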